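/- Let b : ℝⁿ → ℝⁿ be globally Lipschitz with constant K, fix x₁ = 0 and x₂ = x ∈ ℝⁿ with x ≠ 0, and let C_p be the Poincaré constant of the interval (0,1). Then there exists a constant C_T̂ > 0, depending only on |x|, K, C_p and ‖b(φ_L)‖_{L²(0,1)} where φ_L(s) = xs, such that T̂(φ̄) ≥ C_T̂ for every φ̄ ∈ A₁; one may take C_T̂ = min{ |x| / (√2 ‖b(φ_L)‖_{L²(0,1)}), 1/(√2 K C_p) }. -/

import Mathlib

open MeasureTheory Filter intervalIntegral
open scoped RealInnerProductSpace Topology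

noncomputable section

/-- `φ` is an `H¹` path on `[0,T]` with (weak) derivative `dφ`:
`dφ` is square integrable on `(0,T)` and `φ` is the primitive of `dφ`. -/
def IsH1Path {n : ℕ} (T : ℝ) (φ dφ : ℝ → EuclideanSpace ℝ (Fin n)) : Prop :=
  MeasureTheory.MemLp dφ 2 (MeasureTheory.volume.restrict (Set.Ioc (0:ℝ) T)) ∧
  ∀ t ∈ Set.Icc (0:ℝ) T, φ t = φ 0 + ∫ s in (0:ℝ)..t, dφ s

/-- The Freidlin–Wentzell action functional `S_T(φ) = (1/2)∫₀ᵀ ‖φ' - b(φ)‖² dt`. -/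
def action {n : ℕ} (b : EuclideanSpace ℝ (Fin n) → EuclideanSpace ℝ (Fin n))
    (T : ℝ) (φ dφ : ℝ → EuclideanSpace ℝ (Fin n)) : ℝ :=
  (1/2) * ∫ t in (0:ℝ)..T, ‖dφ t - b (φ t)‖^2

/-- The `L²(0,T)` norm of an `ℝⁿ`-valued function. -/
def L2norm {n : ℕ} (T : ℝ) (f : ℝ → EuclideanSpace ℝ (Fin n)) : ℝ :=
  Real.sqrt (∫ t in (0:ℝ)..T, ‖f t‖^2)

/-- The admissible set `A_T` of `H¹` transition paths from `x₁` to `x₂` on `[0,T]`. -/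
def Adm {n : ℕ} (T : ℝ) (x₁ x₂ : EuclideanSpace ℝ (Fin n))
    (φ dφ : ℝ → EuclideanSpace ℝ (Fin n)) : Prop :=
  IsH1Path T φ dφ ∧ φ 0 = x₁ ∧ φ T = x₂

/-- The rescaled action `S(T, φ̄) = (T/2)∫₀¹ ‖T⁻¹ φ̄' - b(φ̄)‖² ds` on `[0,1]`. -/
def Ssc {n : ℕ} (b : EuclideanSpace ℝ (Fin n) → EuclideanSpace ℝ (Fin n))
    (T : ℝ) (φ dφ : ℝ → EuclideanSpace ℝ (Fin n)) : ℝ :=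
  (T/2) * ∫ s in (0:ℝ)..1, ‖T⁻¹ • dφ s - b (φ s)‖^2

/-- The optimal linear time scaling `T̂(φ̄) = ‖φ̄'‖_{L²} / ‖b(φ̄)‖_{L²}`. -/
def That {n : ℕ} (b : EuclideanSpace ℝ (Fin n) → EuclideanSpace ℝ (Fin n))
    (φ dφ : ℝ → EuclideanSpace ℝ (Fin n)) : ℝ :=
  L2norm 1 dφ / L2norm 1 (fun s => b (φ s))

/-- The reformulated action `Ŝ(φ̄) = ‖φ̄'‖_{L²} ‖b(φ̄)‖_{L²} − ∫₀¹⟨φ̄', b(φ̄)⟩ ds`. -/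
def Shat {n : ℕ} (b : EuclideanSpace ℝ (Fin n) → EuclideanSpace ℝ (Fin n))
    (φ dφ : ℝ → EuclideanSpace ℝ (Fin n)) : ℝ :=
  L2norm 1 dφ * L2norm 1 (fun s => b (φ s)) - ∫ s in (0:ℝ)..1, ⟪dφ s, b (φ s)⟫

/-- `a` and `c` are adjacent nodes of the partition (finite node set) `P`. -/
def Adjacent (P : Finset ℝ) (a c : ℝ) : Prop :=
  a ∈ P ∧ c ∈ P ∧ a < c ∧ ∀ p ∈ P, p ≤ a ∨ c ≤ p

/-- `φ` is affine on each element of the partition `P`. -/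
def PiecewiseAffineOn {n : ℕ} (P : Finset ℝ) (φ : ℝ → EuclideanSpace ℝ (Fin n)) : Prop :=
  ∀ a c, Adjacent P a c → ∀ t ∈ Set.Icc a c,
    φ t = φ a + ((t - a) / (c - a)) • (φ c - φ a)

/-- `P` is a partition (node set) of `[0,T]`. -/
def IsPartition (T : ℝ) (P : Finset ℝ) : Prop :=
  (0:ℝ) ∈ P ∧ T ∈ P ∧ ∀ p ∈ P, p ∈ Set.Icc (0:ℝ) T

/-- Weak convergence `φ_k ⇀ φ` in `H¹((0,T); ℝⁿ)`, expressed by testing the pair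
`(φ_k, φ_k')` against arbitrary pairs of `L²` functions. -/
def WeakH1Tendsto {n : ℕ} (T : ℝ) (φk dφk : ℕ → ℝ → EuclideanSpace ℝ (Fin n))
    (φ dφ : ℝ → EuclideanSpace ℝ (Fin n)) : Prop :=
  ∀ g₀ g₁ : ℝ → EuclideanSpace ℝ (Fin n),
    MeasureTheory.MemLp g₀ 2 (MeasureTheory.volume.restrict (Set.Ioc (0:ℝ) T)) →
    MeasureTheory.MemLp g₁ 2 (MeasureTheory.volume.restrict (Set.Ioc (0:ℝ) T)) →
    Tendsto (fun k => (∫ t in (0:ℝ)..T, ⟪φk k t, g₀ t⟫) + ∫ t in (0:ℝ)..T, ⟪dφk k t, g₁ t⟫)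
      atTop (𝓝 ((∫ t in (0:ℝ)..T, ⟪φ t, g₀ t⟫) + ∫ t in (0:ℝ)..T, ⟪dφ t, g₁ t⟫))

/-- Values of `S_T` over the admissible set `A_T` (Problem I). -/
def probISet {n : ℕ} (b : EuclideanSpace ℝ (Fin n) → EuclideanSpace ℝ (Fin n))
    (T : ℝ) (x₁ x₂ : EuclideanSpace ℝ (Fin n)) : Set ℝ :=
  {v | ∃ φ dφ, Adm T x₁ x₂ φ dφ ∧ v = action b T φ dφ}

/-- Values of `S_T` over all `T > 0` and `φ ∈ A_T` (Problem II); its infimum is the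
quasi-potential `V(x₁,x₂)`. -/
def probIISet {n : ℕ} (b : EuclideanSpace ℝ (Fin n) → EuclideanSpace ℝ (Fin n))
    (x₁ x₂ : EuclideanSpace ℝ (Fin n)) : Set ℝ :=
  {v | ∃ T, 0 < T ∧ ∃ φ dφ, Adm T x₁ x₂ φ dφ ∧ v = action b T φ dφ}

/-- Values of `Ŝ` over the rescaled admissible set `A₁`. -/
def shatSet {n : ℕ} (b : EuclideanSpace ℝ (Fin n) → EuclideanSpace ℝ (Fin n))
    (x₁ x₂ : EuclideanSpace ℝ (Fin n)) : Set ℝ :=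
  {v | ∃ φ dφ, Adm 1 x₁ x₂ φ dφ ∧ v = Shat b φ dφ}

/-- Membership in the finite element space `B_h` of continuous piecewise affine
admissible paths associated with the partition `P`. -/
def BmemP {n : ℕ} (P : Finset ℝ) (T : ℝ) (x₁ x₂ : EuclideanSpace ℝ (Fin n))
    (φ dφ : ℝ → EuclideanSpace ℝ (Fin n)) : Prop :=
  Adm T x₁ x₂ φ dφ ∧ PiecewiseAffineOn P φ

/-- Values of `S_T` over the finite element space `B_h` (the discretized Problem I). -/
def discSet {n : ℕ} (b : EuclideanSpace ℝ (Fin n) → EuclideanSpace ℝ (Fin n))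
    (P : Finset ℝ) (T : ℝ) (x₁ x₂ : EuclideanSpace ℝ (Fin n)) : Set ℝ :=
  {v | ∃ φ dφ, BmemP P T x₁ x₂ φ dφ ∧ v = action b T φ dφ}

/-- Values of `Ŝ` over the finite element space `B̄_h` (the discretized Problem II). -/
def discShatSet {n : ℕ} (b : EuclideanSpace ℝ (Fin n) → EuclideanSpace ℝ (Fin n))
    (P : Finset ℝ) (x₁ x₂ : EuclideanSpace ℝ (Fin n)) : Set ℝ :=
  {v | ∃ φ dφ, BmemP P 1 x₁ x₂ φ dφ ∧ v = Shat b φ dφ}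

/-! Write `φ̄ = φ_L + u` with `u ∈ H₀¹`. Since `∫₀¹ φ̄' = x`, we get `‖φ̄'‖² = ‖x‖² + ‖u'‖²`,
while the Lipschitz bound and Poincaré's inequality give
`‖b(φ̄)‖² ≤ 2K²‖u‖² + 2‖b(φ_L)‖² ≤ 2K²C_p²‖u'‖² + 2‖b(φ_L)‖²` (all norms in `L²(0,1)`).
Multiplying by `m²`, where `m` is the claimed constant, bounds each term on the right by the
corresponding term of `‖u'‖² + ‖x‖² = ‖φ̄'‖²`, so `m² ‖b(φ̄)‖² ≤ ‖φ̄'‖²`. -/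

open Set

namespace IsH1Path

variable {n : ℕ} {T : ℝ} {φ dφ : ℝ → EuclideanSpace ℝ (Fin n)}

theorem integrableOn (h : IsH1Path T φ dφ) : IntegrableOn dφ (Ioc 0 T) :=
  h.1.integrable one_le_two

theorem intervalIntegrable (h : IsH1Path T φ dφ) {t : ℝ} (ht : t ∈ Icc 0 T) :
    IntervalIntegrable dφ volume 0 t :=
  (intervalIntegrable_iff_integrableOn_Ioc_of_le ht.1).2
    (h.integrableOn.mono_set (Ioc_subset_Ioc_right ht.2))

theorem intervalIntegrable_norm_sq (h : IsH1Path T φ dφ) (hT : 0 ≤ T) :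
    IntervalIntegrable (fun s => ‖dφ s‖ ^ 2) volume 0 T :=
  (intervalIntegrable_iff_integrableOn_Ioc_of_le hT).2
    ((memLp_two_iff_integrable_sq_norm h.1.1).1 h.1)

theorem continuousOn (h : IsH1Path T φ dφ) : ContinuousOn φ (Icc 0 T) := by
  rcases le_or_gt 0 T with hT | hT
  · have hint : IntegrableOn dφ (uIcc 0 T) := by
      rw [uIcc_of_le hT, integrableOn_Icc_iff_integrableOn_Ioc]
      exact h.integrableOn
    have hprim := continuousOn_primitive_interval hint
    rw [uIcc_of_le hT] at hprim
    exact (continuousOn_const.add hprim).congr h.2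
  · simp [Icc_eq_empty_of_lt hT]

theorem sub_linear (h : IsH1Path T φ dφ) (v : EuclideanSpace ℝ (Fin n)) :
    IsH1Path T (fun t => φ t - t • v) (fun s => dφ s - v) := by
  refine ⟨h.1.sub (memLp_const v), fun t ht => ?_⟩
  rw [intervalIntegral.integral_sub (h.intervalIntegrable ht) intervalIntegrable_const,
    intervalIntegral.integral_const]
  simp only [h.2 t ht, sub_zero, zero_smul]
  abel

end IsH1Path

namespace Adm

variable {n : ℕ} {x : EuclideanSpace ℝ (Fin n)} {φ dφ : ℝ → EuclideanSpace ℝ (Fin n)}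

theorem integral_deriv (h : Adm 1 0 x φ dφ) : ∫ s in (0:ℝ)..1, dφ s = x := by
  obtain ⟨hH1, h0, h1⟩ := h
  simpa [h0, h1] using (hH1.2 1 (by simp)).symm

theorem integral_norm_deriv_sub_sq (h : Adm 1 0 x φ dφ) :
    ∫ s in (0:ℝ)..1, ‖dφ s - x‖ ^ 2 = (∫ s in (0:ℝ)..1, ‖dφ s‖ ^ 2) - ‖x‖ ^ 2 := by
  have hdφ := h.1.intervalIntegrable (by simp : (1:ℝ) ∈ Icc 0 1)
  have hinner : ∫ s in (0:ℝ)..1, ⟪dφ s, x⟫ = ‖x‖ ^ 2 := by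
    have := (innerSL ℝ x).intervalIntegral_comp_comm hdφ
    simp only [innerSL_apply_apply, h.integral_deriv, real_inner_self_eq_norm_sq] at this
    rw [← this]
    exact intervalIntegral.integral_congr fun s _ => real_inner_comm _ _
  have hsq := h.1.intervalIntegrable_norm_sq zero_le_one
  have hinner_int : IntervalIntegrable (fun s => 2 * ⟪dφ s, x⟫) volume 0 1 :=
    ((intervalIntegrable_iff_integrableOn_Ioc_of_le zero_le_one).2
      (h.1.integrableOn.inner_const (𝕜 := ℝ) x)).const_mul 2
  simp_rw [norm_sub_sq_real]
  rw [intervalIntegral.integral_add (hsq.sub hinner_int) intervalIntegrable_const,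
    intervalIntegral.integral_sub hsq hinner_int, intervalIntegral.integral_const_mul, hinner]
  simp only [intervalIntegral.integral_const, sub_zero, one_smul]
  ring

theorem norm_sq_le_integral_norm_deriv_sq (h : Adm 1 0 x φ dφ) :
    ‖x‖ ^ 2 ≤ ∫ s in (0:ℝ)..1, ‖dφ s‖ ^ 2 := by
  have := intervalIntegral.integral_nonneg (μ := volume) zero_le_one fun s _ => sq_nonneg ‖dφ s - x‖
  rw [h.integral_norm_deriv_sub_sq] at this
  linarith

end Adm

theorem LipschitzWith.norm_sq_le {E F : Type*} [SeminormedAddCommGroup E]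
    [SeminormedAddCommGroup F] {K : NNReal} {f : E → F} (hf : LipschitzWith K f) (y z : E) :
    ‖f y‖ ^ 2 ≤ 2 * K ^ 2 * ‖y - z‖ ^ 2 + 2 * ‖f z‖ ^ 2 := by
  have hyz : ‖f y‖ ≤ K * ‖y - z‖ + ‖f z‖ :=
    (norm_le_norm_sub_add (f y) (f z)).trans
      (add_le_add_left (by simpa only [dist_eq_norm] using hf.dist_le_mul y z) _)
  nlinarith [sq_nonneg (K * ‖y - z‖ - ‖f z‖), norm_nonneg (f y)]

theorem LipschitzWith.integral_norm_comp_sq_le {E F : Type*} [NormedAddCommGroup E]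
    [NormedAddCommGroup F] {K : NNReal} {f : E → F} (hf : LipschitzWith K f)
    {T : ℝ} (hT : 0 ≤ T) {φ ψ : ℝ → E} (hφ : ContinuousOn φ (Icc 0 T))
    (hψ : ContinuousOn ψ (Icc 0 T)) :
    ∫ s in (0:ℝ)..T, ‖f (φ s)‖ ^ 2 ≤
      2 * K ^ 2 * (∫ s in (0:ℝ)..T, ‖φ s - ψ s‖ ^ 2) + 2 * ∫ s in (0:ℝ)..T, ‖f (ψ s)‖ ^ 2 := by
  have hint : ∀ g : ℝ → ℝ, ContinuousOn g (Icc 0 T) → IntervalIntegrable g volume 0 T :=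
    fun g hg => (uIcc_of_le hT ▸ hg).intervalIntegrable
  have hfφ : IntervalIntegrable (fun s => ‖f (φ s)‖ ^ 2) volume 0 T :=
    hint _ ((hf.continuous.comp_continuousOn hφ).norm.pow 2)
  have hfψ : IntervalIntegrable (fun s => ‖f (ψ s)‖ ^ 2) volume 0 T :=
    hint _ ((hf.continuous.comp_continuousOn hψ).norm.pow 2)
  have hφψ : IntervalIntegrable (fun s => ‖φ s - ψ s‖ ^ 2) volume 0 T :=
    hint _ ((hφ.sub hψ).norm.pow 2)
  rw [← intervalIntegral.integral_const_mul, ← intervalIntegral.integral_const_mul,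
    ← intervalIntegral.integral_add (hφψ.const_mul _) (hfψ.const_mul _)]
  exact intervalIntegral.integral_mono_on hT hfφ ((hφψ.const_mul _).add (hfψ.const_mul _))
    fun s _ => hf.norm_sq_le (φ s) (ψ s)

theorem min_le_sqrt_div_sqrt {a B D L k : ℝ} (hB : 0 < B) (haD : a ^ 2 ≤ D)
    (hBD : B ≤ 2 * k ^ 2 * (D - a ^ 2) + 2 * L) :
    min (a / (√2 * √L)) (1 / (√2 * k)) ≤ √D / √B := by
  set m := min (a / (√2 * √L)) (1 / (√2 * k))
  -- `m ≤ 0` covers the junk values `a / 0 = 0` (when `L ≤ 0`) and `1 / (√2 * k) ≤ 0`.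
  rcases le_or_gt m 0 with hm | hm
  · exact hm.trans (by positivity)
  have hmL' : m ≤ a / (√2 * √L) := min_le_left _ _
  have hLpos : 0 < √2 * √L := (div_pos_iff.1 (hm.trans_le hmL')).elim And.right
    fun h => absurd h.2 (not_lt.2 (by positivity))
  have hmL : m * (√2 * √L) ≤ a := (le_div_iff₀ hLpos).1 hmL'
  have hL : 0 ≤ L := Real.sqrt_pos.1 (pos_of_mul_pos_right hLpos (Real.sqrt_nonneg 2)) |>.le
  have hmk' : m ≤ 1 / (√2 * k) := min_le_right _ _
  have hkpos : 0 < √2 * k := one_div_pos.1 (hm.trans_le hmk')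
  have hmk : m * (√2 * k) ≤ 1 := (le_div_iff₀ hkpos).1 hmk'
  have hmL2 : m ^ 2 * (2 * L) ≤ a ^ 2 := by
    have := pow_le_pow_left₀ (by positivity) hmL 2
    rwa [mul_pow, mul_pow, Real.sq_sqrt zero_le_two, Real.sq_sqrt hL] at this
  have hmk2 : m ^ 2 * (2 * k ^ 2) ≤ 1 := by
    have := pow_le_pow_left₀ (mul_pos hm hkpos).le hmk 2
    rwa [mul_pow, mul_pow, Real.sq_sqrt zero_le_two, one_pow] at this
  have hmB : (m * √B) ^ 2 ≤ D := by
    rw [mul_pow, Real.sq_sqrt hB.le]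
    nlinarith [mul_le_mul_of_nonneg_left hBD (sq_nonneg m),
      mul_le_mul_of_nonneg_right hmk2 (sub_nonneg.2 haD)]
  rw [le_div_iff₀ (Real.sqrt_pos.2 hB)]
  exact Real.le_sqrt_of_sq_le hmB

theorem stmt11_general {n : ℕ} (b : EuclideanSpace ℝ (Fin n) → EuclideanSpace ℝ (Fin n))
    (K : NNReal) (hb : LipschitzWith K b)
    (x : EuclideanSpace ℝ (Fin n))
    (Cp : ℝ)
    -- `C_p` is a Poincaré constant for `H₀¹((0,1))` functions
    (hPoin : ∀ u du : ℝ → EuclideanSpace ℝ (Fin n), IsH1Path 1 u du →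
      u 0 = 0 → u 1 = 0 →
      (∫ s in (0:ℝ)..1, ‖u s‖^2) ≤ Cp^2 * ∫ s in (0:ℝ)..1, ‖du s‖^2) :
    ∀ φ dφ : ℝ → EuclideanSpace ℝ (Fin n), Adm 1 (0 : EuclideanSpace ℝ (Fin n)) x φ dφ →
      L2norm 1 (fun s => b (φ s)) = 0 ∨
      min (‖x‖ / (Real.sqrt 2 * L2norm 1 (fun s => b (s • x))))
          (1 / (Real.sqrt 2 * (K:ℝ) * Cp))
        ≤ That b φ dφ := by
  intro φ dφ hφ
  refine or_iff_not_imp_left.2 fun hb0 => ?_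
  have hpoin := hPoin _ _ (hφ.1.sub_linear x) (by simp [hφ.2.1]) (by simp [hφ.2.2])
  rw [hφ.integral_norm_deriv_sub_sq] at hpoin
  have hlip := hb.integral_norm_comp_sq_le (ψ := fun s : ℝ => s • x) zero_le_one
    hφ.1.continuousOn (by fun_prop)
  rw [That, L2norm, L2norm, L2norm, mul_assoc _ (K : ℝ)]
  refine min_le_sqrt_div_sqrt (Real.sqrt_ne_zero'.1 hb0)
    hφ.norm_sq_le_integral_norm_deriv_sq ?_
  linarith [mul_le_mul_of_nonneg_left hpoin (sq_nonneg (K : ℝ))]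

/-- Property 3.4: a uniform positive lower bound for `T̂` on `A₁` (with
`x₁ = 0`, `x₂ = x ≠ 0`): `T̂(φ̄) ≥ C_T̂ := min{‖x‖/(√2‖b(φ_L)‖_{L²}), 1/(√2 K C_p)}`,
where `φ_L(s) = sx` and `C_p` is the Poincaré constant of `(0,1)` (for `H₀¹` functions);
`T̂` is interpreted as `+∞` when its denominator `‖b(φ̄)‖_{L²}` vanishes. -/
theorem stmt11 {n : ℕ} (b : EuclideanSpace ℝ (Fin n) → EuclideanSpace ℝ (Fin n))
    (K : NNReal) (hb : LipschitzWith K b) (hK : 0 < (K:ℝ))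
    (x : EuclideanSpace ℝ (Fin n)) (hx : x ≠ 0)
    (Cp : ℝ) (hCp : 0 < Cp)
    -- `C_p` is a Poincaré constant for `H₀¹((0,1))` functions
    (hPoin : ∀ u du : ℝ → EuclideanSpace ℝ (Fin n), IsH1Path 1 u du →
      u 0 = 0 → u 1 = 0 →
      (∫ s in (0:ℝ)..1, ‖u s‖^2) ≤ Cp^2 * ∫ s in (0:ℝ)..1, ‖du s‖^2) :
    ∀ φ dφ : ℝ → EuclideanSpace ℝ (Fin n), Adm 1 (0 : EuclideanSpace ℝ (Fin n)) x φ dφ →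
      L2norm 1 (fun s => b (φ s)) = 0 ∨
      min (‖x‖ / (Real.sqrt 2 * L2norm 1 (fun s => b (s • x))))
          (1 / (Real.sqrt 2 * (K:ℝ) * Cp))
        ≤ That b φ dφ :=
  stmt11_general b K hb x Cp hPoin
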